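/- Let n ≥ 3 and let b, c be integers with 1 ≤ b < c ≤ n. Let B_n^{0,b,c} be the (n−2)×(n−2) integer matrix obtained from B_n by deleting the three columns indexed by 0, b and c. Then det(B_n^{0,b,c}) = (−1)^{b+c}·(b−c). -/

import Mathlib

/-- The `(n-2) × (n+1)` integer matrix `B_n`, with rows indexed by
`i ∈ {1,…,n-2}` (a row index `i : Fin (n-2)` represents `i+1`) and columns
indexed by `j ∈ {0,…,n}`: the row corresponding to `i` has entry `-2` in
column `0`, `1` in column `i`, `-2` in column `i+1` and `1` in column `i+2`,
and `0` elsewhere. -/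
def buchiB (n : ℕ) : Matrix (Fin (n - 2)) (Fin (n + 1)) ℤ :=
  Matrix.of fun i j =>
    if (j : ℕ) = 0 then -2
    else if (j : ℕ) = (i : ℕ) + 1 then 1
    else if (j : ℕ) = (i : ℕ) + 2 then -2
    else if (j : ℕ) = (i : ℕ) + 3 then 1
    else 0

/-!
Without column `0`, `B_n` is the matrix `D` of second differences: its rows are
`e_i - 2 e_{i+1} + e_{i+2}`, indexed from `0`. Border `D` below by the unit rows `e_β`, `e_γ`
(`β = b - 1 < γ = c - 1`) to get a square matrix `M`. Expanding `det M` along these two rows gives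
`det M = -(-1)^(β+γ) · det(D without columns β, γ)`. On the other hand `M = S E²`, where `E` is
the unipotent upper bidiagonal matrix with `v E = (v_j - v_{j-1})_j`, and `S` has the rows of the
identity on top and the ramps `(j - β + 1)⁺`, `(j - γ + 1)⁺` (the second antidifferences of
`e_β`, `e_γ`) below. Hence `det M = det S`, the `2 × 2` determinant of the ramps at `j = n - 2`,
`n - 1`, which is `γ - β`.
-/

open Matrix

namespace Matrix

variable {R : Type*}

theorem det_succ_row_of_eq_single [CommRing R] {k : ℕ} (A : Matrix (Fin (k + 1)) (Fin (k + 1)) R)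
    {i j : Fin (k + 1)} (h : A i = Pi.single j 1) :
    A.det = (-1) ^ (i + j : ℕ) * (A.submatrix i.succAbove j.succAbove).det := by
  rw [det_succ_row A i, Fintype.sum_eq_single j fun j' hj' => by simp [h, hj']]
  simp [h]

def appendTwoRows {m : ℕ} {α : Type*} (A : Matrix (Fin m) α R) (u v : α → R) :
    Matrix (Fin (m + 2)) α R :=
  of (Fin.append A ![u, v])

section appendTwoRows

variable {m : ℕ} {α : Type*} (A : Matrix (Fin m) α R) (u v : α → R)

@[simp] theorem appendTwoRows_castAdd (i : Fin m) : appendTwoRows A u v (Fin.castAdd 2 i) = A i :=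
  Fin.append_left _ _ i

@[simp] theorem appendTwoRows_natAdd_zero : appendTwoRows A u v (Fin.natAdd m 0) = u :=
  Fin.append_right _ ![u, v] 0

@[simp] theorem appendTwoRows_natAdd_one : appendTwoRows A u v (Fin.natAdd m 1) = v :=
  Fin.append_right _ ![u, v] 1

theorem appendTwoRows_mul [NonUnitalNonAssocSemiring R] [Fintype α] {β : Type*}
    (N : Matrix α β R) :
    appendTwoRows A u v * N = appendTwoRows (A * N) (u ᵥ* N) (v ᵥ* N) := by
  funext i
  rw [mul_apply_eq_vecMul]
  refine Fin.addCases (fun i => ?_) (fun r => ?_) i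
  · simp [mul_apply_eq_vecMul]
  · fin_cases r <;> simp

end appendTwoRows

theorem det_appendTwoRows_one_submatrix [CommRing R] {m : ℕ} (u v : Fin (m + 2) → R) :
    (appendTwoRows ((1 : Matrix (Fin (m + 2)) (Fin (m + 2)) R).submatrix (Fin.castAdd 2) id)
      u v).det
      = u (Fin.natAdd m 0) * v (Fin.natAdd m 1) - u (Fin.natAdd m 1) * v (Fin.natAdd m 0) := by
  set A := appendTwoRows ((1 : Matrix (Fin (m + 2)) (Fin (m + 2)) R).submatrix (Fin.castAdd 2) id)
    u v
  have hblocks : A.reindex finSumFinEquiv.symm finSumFinEquiv.symm =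
      fromBlocks 1 0 (A.submatrix (Fin.natAdd m) (Fin.castAdd 2))
        !![u (Fin.natAdd m 0), u (Fin.natAdd m 1); v (Fin.natAdd m 0), v (Fin.natAdd m 1)] := by
    ext (i | i) (j | j)
    · simp [A, one_apply]
    · simp [A, one_apply, Fin.ext_iff]
      omega
    · simp
    · fin_cases i <;> fin_cases j <;> simp [A]
  rw [← det_reindex_self finSumFinEquiv.symm, hblocks, det_fromBlocks_zero₁₂, det_one, one_mul,
    det_fin_two_of]

end Matrix

theorem Fin.range_succAbove_comp_succAbove {m : ℕ} {β : Fin (m + 1)} {γ : Fin (m + 2)}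
    (h : β.castSucc < γ) : Set.range (γ.succAbove ∘ β.succAbove) = {β.castSucc, γ}ᶜ := by
  rw [Set.range_comp, Fin.range_succAbove,
    Set.image_compl_eq_range_sdiff_image Fin.succAbove_right_injective, Fin.range_succAbove,
    Set.image_singleton, Fin.succAbove_of_castSucc_lt γ β h]
  ext j
  simp [or_comm]

def diffMat (n : ℕ) : Matrix (Fin n) (Fin n) ℤ :=
  of fun i j => if j = i then 1 else if (j : ℕ) = i + 1 then -1 else 0

theorem det_diffMat (n : ℕ) : (diffMat n).det = 1 := by
  rw [det_of_isUpperTriangular]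
  · simp [diffMat]
  · intro i j (hji : j < i)
    rw [Fin.lt_def] at hji
    simp only [diffMat, of_apply]
    rw [if_neg (by omega), if_neg (by omega)]

@[simp] theorem vecMul_diffMat_zero {n : ℕ} (v : Fin (n + 1) → ℤ) :
    (v ᵥ* diffMat (n + 1)) 0 = v 0 := by
  simp [vecMul, dotProduct, diffMat]

@[simp] theorem vecMul_diffMat_succ {n : ℕ} (v : Fin (n + 1) → ℤ) (j : Fin n) :
    (v ᵥ* diffMat (n + 1)) j.succ = v j.succ - v j.castSucc := by
  rw [vecMul, dotProduct, Fintype.sum_eq_add j.succ j.castSucc Fin.castSucc_lt_succ.ne']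
  · simp [diffMat, sub_eq_add_neg, Fin.castSucc_lt_succ.ne']
  · rintro x ⟨h1, h2⟩
    simp only [ne_eq, Fin.ext_iff, Fin.val_succ, Fin.val_castSucc] at h1 h2
    simp only [diffMat, of_apply, Fin.ext_iff, Fin.val_succ]
    rw [if_neg (by omega), if_neg (by omega), mul_zero]

def stepVec {n : ℕ} (β : Fin n) : Fin n → ℤ := fun j => if β ≤ j then 1 else 0

def rampVec {n : ℕ} (β : Fin n) : Fin n → ℤ := fun j => if β ≤ j then (j : ℤ) - β + 1 else 0

theorem rampVec_vecMul_diffMat {n : ℕ} (β : Fin (n + 1)) :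
    rampVec β ᵥ* diffMat (n + 1) = stepVec β := by
  ext j
  induction j using Fin.cases with
  | zero =>
    rw [vecMul_diffMat_zero]
    by_cases h : β = 0 <;> simp [rampVec, stepVec, h]
  | succ j =>
    simp only [vecMul_diffMat_succ, rampVec, stepVec, Fin.le_def, Fin.val_succ, Fin.val_castSucc]
    split_ifs <;> push_cast <;> omega

theorem stepVec_vecMul_diffMat {n : ℕ} (β : Fin (n + 1)) :
    stepVec β ᵥ* diffMat (n + 1) = Pi.single β 1 := by
  ext j
  induction j using Fin.cases with
  | zero => simp [stepVec, Pi.single_apply, eq_comm]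
  | succ j =>
    simp only [vecMul_diffMat_succ, stepVec, Pi.single_apply, Fin.le_iff_val_le_val, Fin.ext_iff,
      Fin.val_succ, Fin.val_castSucc]
    split_ifs <;> omega

def secondDiff (m : ℕ) : Matrix (Fin m) (Fin (m + 2)) ℤ :=
  of fun i j =>
    if (j : ℕ) = i then 1 else if (j : ℕ) = i + 1 then -2 else if (j : ℕ) = i + 2 then 1 else 0

theorem buchiB_submatrix_succ (m : ℕ) : (buchiB (m + 2)).submatrix id Fin.succ = secondDiff m := by
  ext i j
  simp only [buchiB, secondDiff, submatrix_apply, of_apply, id, Fin.val_succ]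
  split_ifs <;> omega

theorem one_submatrix_castAdd_mul_diffMat_mul_diffMat (m : ℕ) :
    (1 : Matrix (Fin (m + 2)) (Fin (m + 2)) ℤ).submatrix (Fin.castAdd 2) id
      * diffMat (m + 2) * diffMat (m + 2) = secondDiff m := by
  ext i j
  have hrow : ((1 : Matrix (Fin (m + 2)) (Fin (m + 2)) ℤ).submatrix (Fin.castAdd 2) id
      * diffMat (m + 2)) i = diffMat (m + 2) (Fin.castAdd 2 i) := by
    ext k
    simp [mul_apply, one_apply]
  rw [mul_apply_eq_vecMul, hrow]
  induction j using Fin.cases with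
  | zero =>
    rw [vecMul_diffMat_zero]
    simp [secondDiff, diffMat, Fin.ext_iff, eq_comm]
  | succ j =>
    rw [vecMul_diffMat_succ]
    simp only [secondDiff, diffMat, of_apply, Fin.ext_iff, Fin.val_castAdd, Fin.val_succ,
      Fin.val_castSucc]
    split_ifs <;> omega

theorem det_appendTwoRows_secondDiff {m : ℕ} {β γ : Fin (m + 2)} (h : β < γ) :
    (appendTwoRows (secondDiff m) (Pi.single β 1) (Pi.single γ 1)).det = (γ : ℤ) - β := by
  have hfactor : appendTwoRows (secondDiff m) (Pi.single β 1) (Pi.single γ 1) =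
      appendTwoRows ((1 : Matrix (Fin (m + 2)) (Fin (m + 2)) ℤ).submatrix (Fin.castAdd 2) id)
        (rampVec β) (rampVec γ) * diffMat (m + 2) * diffMat (m + 2) := by
    rw [appendTwoRows_mul, appendTwoRows_mul, one_submatrix_castAdd_mul_diffMat_mul_diffMat,
      rampVec_vecMul_diffMat, rampVec_vecMul_diffMat, stepVec_vecMul_diffMat,
      stepVec_vecMul_diffMat]
  rw [hfactor, det_mul, det_mul, det_diffMat, mul_one, mul_one, det_appendTwoRows_one_submatrix]
  have hγ := γ.isLt
  rw [Fin.lt_def] at h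
  -- also when `γ = m + 1`, where both sides vanish
  have hγ0 : rampVec γ (Fin.natAdd m 0) = (m : ℤ) - γ + 1 := by
    simp only [rampVec, Fin.le_def, Fin.val_natAdd, Fin.val_zero]
    split_ifs <;> omega
  rw [hγ0]
  simp only [rampVec, Fin.le_def, Fin.val_natAdd, Fin.val_zero, Fin.val_one]
  rw [if_pos (by omega), if_pos (by omega), if_pos (by omega)]
  push_cast
  ring

theorem det_secondDiff_submatrix_succAbove {m : ℕ} {β : Fin (m + 1)} {γ : Fin (m + 2)}
    (h : β.castSucc < γ) :
    ((secondDiff m).submatrix id (γ.succAbove ∘ β.succAbove)).det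
      = (-1) ^ (β + γ : ℕ) * ((β : ℤ) - γ) := by
  set A := appendTwoRows (secondDiff m) (Pi.single β.castSucc 1) (Pi.single γ 1)
  set X := ((secondDiff m).submatrix id (γ.succAbove ∘ β.succAbove)).det
  have hlast : A (Fin.last (m + 1)) = Pi.single γ 1 := appendTwoRows_natAdd_one _ _ _
  have hlast' : A.submatrix Fin.castSucc γ.succAbove (Fin.last m) = Pi.single β 1 := by
    funext k
    have hrow : A (Fin.last m).castSucc = Pi.single β.castSucc 1 :=
      appendTwoRows_natAdd_zero _ _ _
    rw [submatrix_apply, hrow, ← Fin.succAbove_of_castSucc_lt γ β h, Pi.single_apply]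
    simp only [Fin.succAbove_right_inj, Pi.single_apply]
  have hD : A.submatrix (Fin.castSucc ∘ Fin.castSucc) (γ.succAbove ∘ β.succAbove)
      = (secondDiff m).submatrix id (γ.succAbove ∘ β.succAbove) := by
    ext i j
    exact congrFun (appendTwoRows_castAdd _ _ _ i) _
  have hsign : ((-1 : ℤ) ^ (m + 1 + γ : ℕ)) * (-1) ^ (m + β : ℕ) = -(-1) ^ (β + γ : ℕ) := by
    rw [← pow_add, show m + 1 + (γ : ℕ) + (m + β) = β + γ + 1 + 2 * m by ring, pow_add, pow_add,
      pow_mul]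
    norm_num
  have hsq : ((-1 : ℤ) ^ (β + γ : ℕ)) * (-1) ^ (β + γ : ℕ) = 1 := by
    rw [← pow_add, ← two_mul, pow_mul]
    norm_num
  have hA : -(-1) ^ (β + γ : ℕ) * X = γ - β := by
    have := det_appendTwoRows_secondDiff h
    rw [det_succ_row_of_eq_single A hlast, Fin.succAbove_last,
      det_succ_row_of_eq_single _ hlast', Fin.succAbove_last, submatrix_submatrix, hD,
      Fin.val_last, Fin.val_last, Fin.val_castSucc, ← mul_assoc, hsign] at this
    exact this
  linear_combination (-(-1) ^ (β + γ : ℕ)) * hA - X * hsq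

theorem buchiB_det_remove_col_zero (n b c : ℕ)
    (hb : 1 ≤ b) (hbc : b < c) (hcn : c ≤ n)
    (f : Fin (n - 2) → Fin (n + 1)) (hf : StrictMono f)
    (hrange : ∀ j : Fin (n + 1),
      j ∈ Set.range f ↔ ((j : ℕ) ≠ 0 ∧ (j : ℕ) ≠ b ∧ (j : ℕ) ≠ c)) :
    ((buchiB n).submatrix id f).det = (-1) ^ (b + c) * ((b : ℤ) - c) := by
  obtain ⟨m, rfl⟩ : ∃ m, n = m + 2 := ⟨n - 2, by omega⟩
  let β : Fin (m + 1) := ⟨b - 1, by omega⟩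
  let γ : Fin (m + 2) := ⟨c - 1, by omega⟩
  have hβγ : β.castSucc < γ := by
    rw [Fin.lt_def]
    simp only [Fin.val_castSucc, β, γ]
    omega
  have hf_eq : f = Fin.succ ∘ γ.succAbove ∘ β.succAbove := by
    refine (hf.range_inj (Fin.strictMono_succ.comp
      ((Fin.strictMono_succAbove γ).comp (Fin.strictMono_succAbove β)))).mp (Set.ext fun j => ?_)
    rw [hrange, Set.range_comp, Fin.range_succAbove_comp_succAbove hβγ]
    induction j using Fin.cases with
    | zero => simp
    | succ j =>
      rw [(Fin.succ_injective _).mem_set_image]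
      simp only [Set.mem_compl_iff, Set.mem_insert_iff, Set.mem_singleton_iff, Fin.ext_iff,
        Fin.val_succ, Fin.val_castSucc, β, γ]
      omega
  have hsub : (buchiB (m + 2)).submatrix id f
      = (secondDiff m).submatrix id (γ.succAbove ∘ β.succAbove) := by
    rw [hf_eq, ← buchiB_submatrix_succ]
    rfl
  rw [hsub, det_secondDiff_submatrix_succAbove hβγ,
    show b + c = (b - 1) + (c - 1) + 2 by omega, pow_add]
  simp only [β, γ]
  push_cast [Nat.cast_sub hb, Nat.cast_sub (hb.trans hbc.le)]
  ring
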